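/- arXiv:1411.4224 — 2 statements merged into one kernel-verified Lean document; each statement's English description precedes it below -/
import Mathlib

section
/- Let d ≥ 2 and 1 < p < ∞. Let Ω ⊆ ℝ^d be an exterior domain whose boundary ∂Ω has finite (d-1)-dimensional Hausdorff measure H, and let v be C¹ on an open set containing the closure of Ω, with v ≥ 0 on Ω and ∫_{Ω∩B_r}(|v|^p + |∇v|^p) dx < ∞ for all r > 0. Let h : ∂Ω × ℝ → ℝ be such that x ↦ h(x, v(x)) is H-integrable on ∂Ω and h(x, v(x))·v(x) ≥ 0 for H-a.e. x ∈ ∂Ω. Assume the weak Robin formulation: ∫_Ω |∇v(x)|^{p-2} ∇v(x)·∇ψ(x) dx + ∫_{∂Ω} h(x, v(x)) ψ(x) dH(x) = 0 for every function ψ that is C¹ on an open set containing the closure of Ω and has bounded support. If v(x) → 0 as |x| → ∞, then v ≡ 0 on Ω. (Theorem 1, case of Robin/Neumann boundary conditions.) -/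
/-!
Test the weak formulation with `ψ = (v - ε)₊²`, whose gradient is `2 (v - ε)₊ ∇v`. The interior
term becomes `∫_Ω 2 (v - ε)₊ |∇v|^p ≥ 0` and the boundary term `∫ h(v) (v - ε)₊² dH` is
nonnegative by the sign condition, so both vanish. By continuity `∇ψ = 0` on the connected set
`Ω`, so `ψ` is constant there; since `v → 0` at infinity, `ψ` vanishes outside a compact set,
which cannot contain the unbounded set `Ω`. Hence `v ≤ ε` for every `ε > 0`.
-/

open MeasureTheory Filter Metric
open scoped RealInnerProductSpace

/-- An exterior domain of `ℝ^d`: a connected open set whose complement is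
compact and nonempty. -/
def IsExteriorDomain {d : ℕ} (Ω : Set (EuclideanSpace ℝ (Fin d))) : Prop :=
  IsOpen Ω ∧ IsConnected Ω ∧ IsCompact Ωᶜ ∧ Ωᶜ.Nonempty

open Set Function Topology

theorem hasDerivAt_max_zero_sq (t : ℝ) :
    HasDerivAt (fun s : ℝ => max s 0 ^ 2) (2 * max t 0) t := by
  rcases lt_trichotomy t 0 with ht | rfl | ht
  · have hzero : (fun s : ℝ => max s 0 ^ 2) =ᶠ[𝓝 t] fun _ => 0 := by
      filter_upwards [Iio_mem_nhds ht] with s hs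
      simp [max_eq_right (show s < 0 from hs).le]
    simpa [max_eq_right ht.le] using (hasDerivAt_const t (0 : ℝ)).congr_of_eventuallyEq hzero
  · rw [hasDerivAt_iff_isLittleO]
    have hle : (fun s : ℝ => max s 0 ^ 2) =O[𝓝 0] fun s => s ^ 2 :=
      Asymptotics.isBigO_of_le _ fun s => by
        rcases le_total s 0 with hs | hs <;> simp [hs, sq_nonneg]
    simpa using hle.trans_isLittleO (Asymptotics.isLittleO_pow_id one_lt_two)
  · have hsq : (fun s : ℝ => max s 0 ^ 2) =ᶠ[𝓝 t] fun s => s ^ 2 := by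
      filter_upwards [Ioi_mem_nhds ht] with s hs
      rw [max_eq_left (show 0 < s from hs).le]
    simpa [max_eq_left ht.le] using (hasDerivAt_pow 2 t).congr_of_eventuallyEq hsq

theorem contDiff_max_zero_sq : ContDiff ℝ 1 (fun s : ℝ => max s 0 ^ 2) := by
  rw [contDiff_one_iff_deriv]
  refine ⟨fun t => (hasDerivAt_max_zero_sq t).differentiableAt, ?_⟩
  rw [funext fun t => (hasDerivAt_max_zero_sq t).deriv]
  fun_prop

theorem norm_rpow_sub_two_mul_inner_smul_self {E : Type*} [NormedAddCommGroup E]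
    [InnerProductSpace ℝ E] {p : ℝ} (hp : p ≠ 0) (a : ℝ) (g : E) :
    ‖g‖ ^ (p - 2) * ⟪g, a • g⟫ = a * ‖g‖ ^ p := by
  rcases eq_or_ne g 0 with rfl | hg
  · simp [Real.zero_rpow hp]
  · rw [real_inner_smul_right, real_inner_self_eq_norm_sq, ← Real.rpow_natCast, mul_left_comm,
      ← Real.rpow_add (norm_pos_iff.2 hg)]
    norm_num

theorem mul_max_sub_zero_sq_nonneg {a b ε : ℝ} (hε : 0 ≤ ε) (hab : 0 ≤ a * b) :
    0 ≤ a * max (b - ε) 0 ^ 2 := by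
  rcases le_or_gt b ε with hb | hb
  · simp [max_eq_right (sub_nonpos.2 hb)]
  · exact mul_nonneg (nonneg_of_mul_nonneg_left hab (hε.trans_lt hb)) (sq_nonneg _)

theorem hasCompactSupport_max_sub_zero {X : Type*} [TopologicalSpace X] [T2Space X]
    {v : X → ℝ} {ε : ℝ} (hv : Tendsto v (cocompact X) (𝓝 0)) (hε : 0 < ε) :
    HasCompactSupport fun x => max (v x - ε) 0 := by
  obtain ⟨K, hK, hKv⟩ := mem_cocompact.1 (hv (Iio_mem_nhds hε))
  exact HasCompactSupport.intro' hK hK.isClosed fun x hx =>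
    max_eq_right (sub_nonpos.2 (hKv hx).le)

theorem MeasureTheory.eqOn_zero_of_setIntegral_eq_zero {X : Type*} [TopologicalSpace X]
    [MeasurableSpace X] [OpensMeasurableSpace X] {μ : Measure X} [μ.IsOpenPosMeasure]
    {U : Set X} {f : X → ℝ} (hU : IsOpen U) (hf : ContinuousOn f U) (hf0 : ∀ x ∈ U, 0 ≤ f x)
    (hfi : IntegrableOn f U μ) (h : ∫ x in U, f x ∂μ = 0) : EqOn f 0 U :=
  have hf_ae : f =ᵐ[μ.restrict U] 0 :=
    (setIntegral_eq_zero_iff_of_nonneg_ae (ae_restrict_of_forall_mem hU.measurableSet hf0) hfi).1 h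
  μ.eqOn_open_of_ae_eq hf_ae hU hf continuousOn_const

theorem MeasureTheory.IntegrableOn.continuousOn_mul_of_isBounded_support {E : Type*}
    [NormedAddCommGroup E] [ProperSpace E] [MeasurableSpace E] [OpensMeasurableSpace E]
    {μ : Measure E} {Ω : Set E} {c g : E → ℝ} (hΩ : MeasurableSet Ω)
    (hg : ∀ r > 0, IntegrableOn g (Ω ∩ ball 0 r) μ) (hc : ContinuousOn c (closure Ω))
    (hcs : Bornology.IsBounded (support c)) : IntegrableOn (fun x => c x * g x) Ω μ := by
  obtain ⟨R, hR, hcR⟩ := hcs.subset_ball_lt 0 0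
  refine ((hg R hR).continuousOn_mul_of_subset (hc.mono inter_subset_left)
    ((isCompact_closedBall 0 R).inter_left isClosed_closure) (hΩ.inter measurableSet_ball)
    (inter_subset_inter subset_closure ball_subset_closedBall)).of_forall_sdiff_eq_zero hΩ ?_
  intro x hx
  rw [notMem_support.1 fun hcx => hx.2 ⟨hx.1, hcR hcx⟩, zero_mul]

theorem IsOpen.eqOn_zero_of_fderiv_eq_zero {F : Type*} [NormedAddCommGroup F] [NormedSpace ℝ F]
    [NoncompactSpace F] {Ω : Set F} {f : F → ℝ} (hΩ : IsOpen Ω) (hΩc : IsPreconnected Ω)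
    (hΩcpt : IsCompact Ωᶜ) (hfs : HasCompactSupport f) (hf : DifferentiableOn ℝ f Ω)
    (hf' : EqOn (fderiv ℝ f) 0 Ω) : EqOn f 0 Ω := by
  obtain ⟨y, hyΩ, hyf⟩ : ∃ y ∈ Ω, y ∉ tsupport f := by
    simpa [eq_univ_iff_forall] using (hΩcpt.union hfs).ne_univ
  intro x hx
  rw [hΩ.is_const_of_fderiv_eq_zero hΩc hf hf' hx hyΩ]
  exact image_eq_zero_of_notMem_tsupport hyf

section Robin

variable {E : Type*} [NormedAddCommGroup E] [InnerProductSpace ℝ E] [CompleteSpace E]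

theorem HasGradientAt.max_sub_zero_sq {v : E → ℝ} {g x : E} (hv : HasGradientAt v g x)
    (ε : ℝ) :
    HasGradientAt (fun y => max (v y - ε) 0 ^ 2) ((2 * max (v x - ε) 0) • g) x := by
  rw [hasGradientAt_iff_hasFDerivAt, map_smul]
  exact (hasDerivAt_max_zero_sq (v x - ε)).comp_hasFDerivAt x (hv.hasFDerivAt.sub_const ε)

theorem ContDiffOn.continuousOn_gradient {v : E → ℝ} {U : Set E} (hv : ContDiffOn ℝ 1 v U)
    (hU : IsOpen U) : ContinuousOn (gradient v) U :=
  (InnerProductSpace.toDual ℝ E).symm.continuous.comp_continuousOn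
    (hv.continuousOn_fderiv_of_isOpen hU le_rfl)

variable [MeasurableSpace E] [OpensMeasurableSpace E]

def IsWeakRobinSolution (μ H : Measure E) (p : ℝ) (Ω : Set E) (h : E → ℝ → ℝ)
    (v : E → ℝ) : Prop :=
  ∀ (ψ : E → ℝ) (V : Set E), IsOpen V → closure Ω ⊆ V → ContDiffOn ℝ 1 ψ V →
    Bornology.IsBounded (support ψ) →
    (∫ x in Ω, ‖gradient v x‖ ^ (p - 2) * ⟪gradient v x, gradient ψ x⟫ ∂μ)
      + ∫ x, h x (v x) * ψ x ∂H = 0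

variable {μ H : Measure E} {p ε : ℝ} {Ω U : Set E} {h : E → ℝ → ℝ} {v : E → ℝ}

theorem IsWeakRobinSolution.setIntegral_max_sub_mul_rpow_eq_zero
    (hsol : IsWeakRobinSolution μ H p Ω h v) (hp : 0 < p) (hε : 0 ≤ ε) (hΩ : IsOpen Ω)
    (hU : IsOpen U) (hUΩ : closure Ω ⊆ U) (hv : ContDiffOn ℝ 1 v U)
    (hcs : HasCompactSupport fun x => max (v x - ε) 0)
    (hsign : ∀ᵐ x ∂H, 0 ≤ h x (v x) * v x) :
    ∫ x in Ω, 2 * max (v x - ε) 0 * ‖gradient v x‖ ^ p ∂μ = 0 := by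
  have hψ := hsol (fun x => max (v x - ε) 0 ^ 2) U hU hUΩ
    (contDiff_max_zero_sq.comp_contDiffOn (hv.sub contDiffOn_const))
    ((hcs.comp_left (g := fun s : ℝ => s ^ 2) (by norm_num)).isCompact.isBounded.subset
      (subset_tsupport _))
  have hgrad : ∀ x ∈ Ω, ‖gradient v x‖ ^ (p - 2) *
      ⟪gradient v x, gradient (fun x => max (v x - ε) 0 ^ 2) x⟫ =
      2 * max (v x - ε) 0 * ‖gradient v x‖ ^ p := fun x hx => by
    have hvx := (hv.differentiableOn one_ne_zero x (hUΩ (subset_closure hx))).differentiableAt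
      (hU.mem_nhds (hUΩ (subset_closure hx)))
    rw [(hvx.hasGradientAt.max_sub_zero_sq ε).gradient,
      norm_rpow_sub_two_mul_inner_smul_self hp.ne']
  rw [setIntegral_congr_fun hΩ.measurableSet hgrad] at hψ
  have hboundary : 0 ≤ ∫ x, h x (v x) * max (v x - ε) 0 ^ 2 ∂H :=
    integral_nonneg_of_ae (hsign.mono fun x hx => mul_max_sub_zero_sq_nonneg hε hx)
  have hinterior : 0 ≤ ∫ x in Ω, 2 * max (v x - ε) 0 * ‖gradient v x‖ ^ p ∂μ :=
    setIntegral_nonneg hΩ.measurableSet fun x _ => by positivity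
  linarith

theorem IsWeakRobinSolution.le_of_tendsto_cocompact [ProperSpace E] [NoncompactSpace E]
    [μ.IsOpenPosMeasure] (hsol : IsWeakRobinSolution μ H p Ω h v) (hp : 0 < p) (hε : 0 < ε)
    (hΩ : IsOpen Ω) (hΩc : IsPreconnected Ω) (hΩcpt : IsCompact Ωᶜ) (hU : IsOpen U)
    (hUΩ : closure Ω ⊆ U) (hv : ContDiffOn ℝ 1 v U)
    (hvloc : ∀ r > 0, IntegrableOn (fun x => ‖gradient v x‖ ^ p) (Ω ∩ ball 0 r) μ)
    (hsign : ∀ᵐ x ∂H, 0 ≤ h x (v x) * v x) (hvlim : Tendsto v (cocompact E) (𝓝 0)) :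
    ∀ x ∈ Ω, v x ≤ ε := by
  have hcs := hasCompactSupport_max_sub_zero hvlim hε
  have hΩU : Ω ⊆ U := subset_closure.trans hUΩ
  have hc : ContinuousOn (fun x => 2 * max (v x - ε) 0) U :=
    continuousOn_const.mul ((hv.continuousOn.sub continuousOn_const).sup continuousOn_const)
  have hgp : ContinuousOn (fun x => ‖gradient v x‖ ^ p) U :=
    (hv.continuousOn_gradient hU).norm.rpow_const fun _ _ => Or.inr hp.le
  have henergy : EqOn (fun x => 2 * max (v x - ε) 0 * ‖gradient v x‖ ^ p) 0 Ω :=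
    eqOn_zero_of_setIntegral_eq_zero hΩ ((hc.mul hgp).mono hΩU) (fun x _ => by positivity)
      (IntegrableOn.continuousOn_mul_of_isBounded_support hΩ.measurableSet hvloc (hc.mono hUΩ)
        (hcs.mul_left.isCompact.isBounded.subset (subset_tsupport _)))
      (hsol.setIntegral_max_sub_mul_rpow_eq_zero hp hε.le hΩ hU hUΩ hv hcs hsign)
  have hgrad : ∀ x ∈ Ω, HasGradientAt (fun y => max (v y - ε) 0 ^ 2) 0 x := fun x hx => by
    have hvx := (hv.differentiableOn one_ne_zero x (hΩU hx)).differentiableAt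
      (hU.mem_nhds (hΩU hx))
    convert hvx.hasGradientAt.max_sub_zero_sq ε using 1
    rcases mul_eq_zero.1 (henergy hx) with h0 | h0
    · rw [h0, zero_smul]
    · rw [norm_eq_zero.1 ((Real.rpow_eq_zero (norm_nonneg _) hp.ne').1 h0), smul_zero]
  have hψ := hΩ.eqOn_zero_of_fderiv_eq_zero (f := fun x => max (v x - ε) 0 ^ 2) hΩc hΩcpt
    (hcs.comp_left (g := fun s : ℝ => s ^ 2) (by norm_num))
    (fun x hx => (hgrad x hx).differentiableAt.differentiableWithinAt)
    (fun x hx => by simpa using (hgrad x hx).hasFDerivAt.fderiv)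
  intro x hx
  simpa [sub_nonpos] using hψ hx

end Robin

theorem liouville_robin_general {d : ℕ} (hd : 2 ≤ d) (p : ℝ) (hp : 1 < p)
    (Ω : Set (EuclideanSpace ℝ (Fin d))) (hΩ : IsExteriorDomain Ω)
    -- the (d-1)-dimensional Hausdorff measure restricted to the boundary of Ω
    (H : Measure (EuclideanSpace ℝ (Fin d)))
    -- v is C¹ on an open set containing the closure of Ω
    (v : EuclideanSpace ℝ (Fin d) → ℝ) (U : Set (EuclideanSpace ℝ (Fin d)))
    (hU : IsOpen U) (hUΩ : closure Ω ⊆ U) (hvC1 : ContDiffOn ℝ 1 v U)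
    (hvpos : ∀ x ∈ Ω, 0 ≤ v x)
    (hvloc : ∀ r > (0 : ℝ),
      IntegrableOn (fun x => |v x| ^ p + ‖gradient v x‖ ^ p) (Ω ∩ ball 0 r))
    (h : EuclideanSpace ℝ (Fin d) → ℝ → ℝ)
    (hhsign : ∀ᵐ x ∂H, 0 ≤ h x (v x) * v x)
    -- weak Robin formulation
    (hweak : ∀ (ψ : EuclideanSpace ℝ (Fin d) → ℝ)
        (V : Set (EuclideanSpace ℝ (Fin d))),
      IsOpen V → closure Ω ⊆ V → ContDiffOn ℝ 1 ψ V →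
      Bornology.IsBounded (Function.support ψ) →
      (∫ x in Ω, ‖gradient v x‖ ^ (p - 2) * ⟪gradient v x, gradient ψ x⟫)
        + ∫ x, h x (v x) * ψ x ∂H = 0)
    (hvlim : Tendsto v (cocompact (EuclideanSpace ℝ (Fin d))) (nhds 0)) :
    ∀ x ∈ Ω, v x = 0 := by
  obtain ⟨hΩo, hΩc, hΩcpt, -⟩ := hΩ
  -- makes `EuclideanSpace ℝ (Fin d)` a `NoncompactSpace`
  have : Nonempty (Fin d) := ⟨⟨0, by omega⟩⟩
  have hp0 : 0 < p := by linarith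
  have hgrad_loc (r : ℝ) (hr : 0 < r) :
      IntegrableOn (fun x => ‖gradient v x‖ ^ p) (Ω ∩ ball 0 r) := by
    refine (hvloc r hr).mono' ?_ (Eventually.of_forall fun x => ?_)
    · exact (((hvC1.continuousOn_gradient hU).norm.rpow_const fun _ _ => Or.inr hp0.le).mono
        (inter_subset_left.trans (subset_closure.trans hUΩ))).aestronglyMeasurable
        (hΩo.measurableSet.inter measurableSet_ball)
    · rw [Real.norm_of_nonneg (by positivity)]
      exact le_add_of_nonneg_left (by positivity)
  intro x hx
  refine le_antisymm (le_of_forall_pos_le_add fun ε hε => ?_) (hvpos x hx)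
  simpa using IsWeakRobinSolution.le_of_tendsto_cocompact (μ := volume) hweak hp0 hε hΩo
    hΩc.isPreconnected hΩcpt hU hUΩ hvC1 hgrad_loc hhsign hvlim x hx

/-- Theorem 1, case of Robin/Neumann boundary conditions. -/
theorem liouville_robin {d : ℕ} (hd : 2 ≤ d) (p : ℝ) (hp : 1 < p)
    (Ω : Set (EuclideanSpace ℝ (Fin d))) (hΩ : IsExteriorDomain Ω)
    -- the (d-1)-dimensional Hausdorff measure restricted to the boundary of Ω
    (H : Measure (EuclideanSpace ℝ (Fin d)))
    (hH : H = (μH[(d : ℝ) - 1]).restrict (frontier Ω))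
    (hfin : μH[(d : ℝ) - 1] (frontier Ω) < ⊤)
    -- v is C¹ on an open set containing the closure of Ω
    (v : EuclideanSpace ℝ (Fin d) → ℝ) (U : Set (EuclideanSpace ℝ (Fin d)))
    (hU : IsOpen U) (hUΩ : closure Ω ⊆ U) (hvC1 : ContDiffOn ℝ 1 v U)
    (hvpos : ∀ x ∈ Ω, 0 ≤ v x)
    (hvloc : ∀ r > (0 : ℝ),
      IntegrableOn (fun x => |v x| ^ p + ‖gradient v x‖ ^ p) (Ω ∩ ball 0 r))
    (h : EuclideanSpace ℝ (Fin d) → ℝ → ℝ)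
    (hhint : Integrable (fun x => h x (v x)) H)
    (hhsign : ∀ᵐ x ∂H, 0 ≤ h x (v x) * v x)
    -- weak Robin formulation
    (hweak : ∀ (ψ : EuclideanSpace ℝ (Fin d) → ℝ)
        (V : Set (EuclideanSpace ℝ (Fin d))),
      IsOpen V → closure Ω ⊆ V → ContDiffOn ℝ 1 ψ V →
      Bornology.IsBounded (Function.support ψ) →
      (∫ x in Ω, ‖gradient v x‖ ^ (p - 2) * ⟪gradient v x, gradient ψ x⟫)
        + ∫ x, h x (v x) * ψ x ∂H = 0)
    (hvlim : Tendsto v (cocompact (EuclideanSpace ℝ (Fin d))) (nhds 0)) :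
    ∀ x ∈ Ω, v x = 0 :=
  liouville_robin_general hd p hp Ω hΩ H v U hU hUΩ hvC1 hvpos hvloc h hhsign hweak hvlim
end

section
/- Let d ≥ 2, 1 < p < ∞, let Ω ⊆ ℝ^d be a connected open set, and let v be C¹ on Ω with ∫_{Ω∩B_{2r}} |∇v(x)|^p φ_r(x)^p dx < ∞ for all r > 0. Suppose there exist constants C > 0, r₀ > 0 and δ ∈ (0,1) such that ∫_{Ω∩B_{2r}} |∇v|^p φ_r^p dx ≤ C · (∫_{(Ω∩B_{2r})\B_r} |∇v|^p φ_r^p dx)^δ for all r > r₀. Then v is constant on Ω. (Lemma 1.) -/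
open MeasureTheory Filter Metric
open scoped RealInnerProductSpace

/-- Lemma 1. -/
theorem liouville_criterion_lemma {d : ℕ} (hd : 2 ≤ d) (p : ℝ) (hp : 1 < p)
    (Ω : Set (EuclideanSpace ℝ (Fin d))) (hΩopen : IsOpen Ω)
    (hΩconn : IsConnected Ω)
    -- the fixed cut-off function φ, with φ_r x = φ (x / r)
    (φ : EuclideanSpace ℝ (Fin d) → ℝ)
    (hφsmooth : ContDiff ℝ (⊤ : ℕ∞) φ)
    (hφsupp : tsupport φ ⊆ closedBall 0 2)
    (hφrange : ∀ x, φ x ∈ Set.Icc (0 : ℝ) 1)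
    (hφone : ∀ x ∈ closedBall (0 : EuclideanSpace ℝ (Fin d)) 1, φ x = 1)
    (v : EuclideanSpace ℝ (Fin d) → ℝ)
    (hvC1 : ContDiffOn ℝ 1 v Ω)
    (hvint : ∀ r > (0 : ℝ),
      IntegrableOn (fun x => ‖gradient v x‖ ^ p * φ (r⁻¹ • x) ^ p)
        (Ω ∩ ball 0 (2 * r)))
    (C r₀ δ : ℝ) (hC : 0 < C) (hr₀ : 0 < r₀) (hδ : δ ∈ Set.Ioo (0 : ℝ) 1)
    (hineq : ∀ r > r₀,
      ∫ x in Ω ∩ ball 0 (2 * r), ‖gradient v x‖ ^ p * φ (r⁻¹ • x) ^ p ≤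
        C * (∫ x in (Ω ∩ ball 0 (2 * r)) \ ball 0 r,
          ‖gradient v x‖ ^ p * φ (r⁻¹ • x) ^ p) ^ δ) :
    ∃ c, ∀ x ∈ Ω, v x = c := by
  have hE : True := trivial
  set h : EuclideanSpace ℝ (Fin d) → ℝ := fun x => ‖gradient v x‖ ^ p with hh
  have hp0 : (0 : ℝ) < p := lt_trans one_pos hp
  have hδ0 : (0 : ℝ) < δ := hδ.1
  have hδ1 : δ < 1 := hδ.2
  -- nonnegativity
  have h_nonneg : ∀ x, 0 ≤ h x := fun x => Real.rpow_nonneg (norm_nonneg _) p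
  have hφp_nonneg : ∀ (r : ℝ) (x : EuclideanSpace ℝ (Fin d)), 0 ≤ φ (r⁻¹ • x) ^ p := fun r x =>
    Real.rpow_nonneg (hφrange (r⁻¹ • x)).1 p
  have hφp_le_one : ∀ (r : ℝ) (x : EuclideanSpace ℝ (Fin d)), φ (r⁻¹ • x) ^ p ≤ 1 := fun r x =>
    Real.rpow_le_one (hφrange (r⁻¹ • x)).1 (hφrange (r⁻¹ • x)).2 hp0.le
  have hhφ_nonneg : ∀ (r : ℝ) (x : EuclideanSpace ℝ (Fin d)), 0 ≤ h x * φ (r⁻¹ • x) ^ p := fun r x =>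
    mul_nonneg (h_nonneg x) (hφp_nonneg r x)
  -- the cutoff equals 1 on the ball of radius r
  have hφr_one : ∀ r > (0 : ℝ), ∀ x ∈ ball (0 : EuclideanSpace ℝ (Fin d)) r, φ (r⁻¹ • x) ^ p = 1 := by
    intro r hr x hx
    have hx' : ‖x‖ < r := by simpa [mem_ball, dist_eq_norm] using hx
    have : φ (r⁻¹ • x) = 1 := by
      apply hφone
      simp only [mem_closedBall, dist_eq_norm, sub_zero, norm_smul, Real.norm_eq_abs,
        abs_of_pos (inv_pos.2 hr)]
      calc r⁻¹ * ‖x‖ ≤ r⁻¹ * r := by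
            exact mul_le_mul_of_nonneg_left hx'.le (inv_pos.2 hr).le
        _ = 1 := inv_mul_cancel₀ hr.ne'
    rw [this, Real.one_rpow]
  -- measurability of sets
  have hmeas : ∀ r : ℝ, MeasurableSet (Ω ∩ ball (0 : EuclideanSpace ℝ (Fin d)) r) := fun r =>
    hΩopen.measurableSet.inter measurableSet_ball
  -- continuity of h on Ω
  have hcont : ContinuousOn h Ω := by
    have h1 : ContinuousOn (fderiv ℝ v) Ω :=
      hvC1.continuousOn_fderiv_of_isOpen hΩopen le_rfl
    have h2 : ContinuousOn (fun x => gradient v x) Ω := by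
      have := ((InnerProductSpace.toDual ℝ (EuclideanSpace ℝ (Fin d))).symm.continuous.comp_continuousOn h1)
      exact this
    exact (h2.norm).rpow_const (fun x _ => Or.inr hp0.le)
  -- integrability of h on Ω ∩ ball 0 r
  have hIntBall : ∀ r > (0 : ℝ), IntegrableOn h (Ω ∩ ball 0 r) := by
    intro r hr
    have hsub : Ω ∩ ball (0 : EuclideanSpace ℝ (Fin d)) r ⊆ Ω ∩ ball 0 (2 * r) :=
      Set.inter_subset_inter_right Ω (ball_subset_ball (by linarith))
    refine ((hvint r hr).mono_set hsub).congr_fun ?_ (hmeas r)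
    intro x hx
    simp [hφr_one r hr x hx.2, hh]
  -- ∫ over Ω∩B_r of h is at most I r := weighted energy
  have hI_le : ∀ r > (0 : ℝ), (∫ x in Ω ∩ ball 0 r, h x) ≤
      ∫ x in Ω ∩ ball 0 (2 * r), h x * φ (r⁻¹ • x) ^ p := by
    intro r hr
    have e1 : (∫ x in Ω ∩ ball 0 r, h x) = ∫ x in Ω ∩ ball 0 r, h x * φ (r⁻¹ • x) ^ p := by
      refine setIntegral_congr_fun (hmeas r) ?_
      intro x hx
      simp [hφr_one r hr x hx.2]
    rw [e1]
    refine setIntegral_mono_set (hvint r hr) ?_ ?_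
    · exact Eventually.of_forall (fun x => hhφ_nonneg r x)
    · exact (Set.inter_subset_inter_right Ω (ball_subset_ball (by linarith))).eventuallyLE
  -- uniform bound on the weighted energies
  set M : ℝ := C ^ (1 - δ)⁻¹ with hM
  have hMpos : 0 < M := Real.rpow_pos_of_pos hC _
  have hI_bound : ∀ r > r₀, (∫ x in Ω ∩ ball 0 (2 * r), h x * φ (r⁻¹ • x) ^ p) ≤ M := by
    intro r hr
    have hrpos : (0 : ℝ) < r := lt_trans hr₀ hr
    set I := ∫ x in Ω ∩ ball 0 (2 * r), h x * φ (r⁻¹ • x) ^ p with hI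
    set J := ∫ x in (Ω ∩ ball 0 (2 * r)) \ ball 0 r, h x * φ (r⁻¹ • x) ^ p with hJ
    have hJ_nonneg : 0 ≤ J :=
      setIntegral_nonneg ((hmeas (2 * r)).diff measurableSet_ball)
        (fun x _ => hhφ_nonneg r x)
    have hJI : J ≤ I := by
      refine setIntegral_mono_set (hvint r hrpos) ?_ ?_
      · exact Eventually.of_forall (fun x => hhφ_nonneg r x)
      · exact Set.diff_subset.eventuallyLE
    have hICJ : I ≤ C * J ^ δ := hineq r hr
    have hICI : I ≤ C * I ^ δ :=
      le_trans hICJ (by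
        have := Real.rpow_le_rpow hJ_nonneg hJI hδ0.le
        nlinarith)
    rcases le_or_gt I 0 with hI0 | hI0
    · linarith
    · have h1δ : (0 : ℝ) < 1 - δ := by linarith
      have key : I ^ (1 - δ) ≤ C := by
        rw [Real.rpow_sub hI0, Real.rpow_one]
        rw [div_le_iff₀ (Real.rpow_pos_of_pos hI0 δ)]
        exact hICI
      calc I = (I ^ (1 - δ)) ^ (1 - δ)⁻¹ := by
            rw [← Real.rpow_mul hI0.le, mul_inv_cancel₀ h1δ.ne', Real.rpow_one]
        _ ≤ C ^ (1 - δ)⁻¹ :=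
            Real.rpow_le_rpow (Real.rpow_nonneg hI0.le _) key (inv_nonneg.2 h1δ.le)
  -- integrals of h over Ω ∩ B_r are bounded by M
  have hBall_bound : ∀ r : ℝ, (∫ x in Ω ∩ ball 0 r, h x) ≤ M := by
    intro r
    set r' : ℝ := max r (r₀ + 1) with hr'
    have hr'pos : (0 : ℝ) < r' := lt_of_lt_of_le (by linarith) (le_max_right _ _)
    have hr'r₀ : r₀ < r' := lt_of_lt_of_le (by linarith) (le_max_right _ _)
    have step1 : (∫ x in Ω ∩ ball 0 r, h x) ≤ ∫ x in Ω ∩ ball 0 r', h x := by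
      refine setIntegral_mono_set (hIntBall r' hr'pos) ?_ ?_
      · exact Eventually.of_forall (fun x => h_nonneg x)
      · exact (Set.inter_subset_inter_right Ω (ball_subset_ball (le_max_left _ _))).eventuallyLE
    exact le_trans step1 (le_trans (hI_le r' hr'pos) (hI_bound r' hr'r₀))
  -- h is integrable on Ω
  have hIntΩ : IntegrableOn h Ω := by
    have haemeas : AEMeasurable h (volume.restrict Ω) :=
      hcont.aemeasurable hΩopen.measurableSet
    refine ⟨haemeas.aestronglyMeasurable, ?_⟩
    rw [hasFiniteIntegral_iff_ofReal (Eventually.of_forall h_nonneg)]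
    set f : ℕ → EuclideanSpace ℝ (Fin d) → ENNReal := fun n =>
      (Ω ∩ ball 0 ((n : ℝ) + 1)).indicator (fun x => ENNReal.ofReal (h x)) with hf
    have hfmeas : ∀ n, AEMeasurable (f n) volume := by
      intro n
      rw [hf]
      refine (aemeasurable_indicator_iff (hmeas _)).2 ?_
      exact ENNReal.measurable_ofReal.comp_aemeasurable
        ((hcont.mono Set.inter_subset_left).aemeasurable (hmeas _))
    have hfmono : ∀ x, Monotone fun n => f n x := by
      intro x m n hmn
      refine Set.indicator_le_indicator_of_subset ?_ (fun a => zero_le) x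
      exact Set.inter_subset_inter_right Ω (ball_subset_ball (by have := (Nat.cast_le (α := ℝ)).2 hmn; linarith))
    have hsup : ∀ x, (⨆ n, f n x) = Ω.indicator (fun x => ENNReal.ofReal (h x)) x := by
      intro x
      by_cases hx : x ∈ Ω
      · obtain ⟨n₀, hn₀⟩ := exists_nat_gt ‖x‖
        refine le_antisymm (iSup_le fun n => ?_) ?_
        · rw [Set.indicator_of_mem hx]
          exact Set.indicator_le_self _ _ x
        · rw [Set.indicator_of_mem hx]
          have hx' : x ∈ Ω ∩ ball (0 : EuclideanSpace ℝ (Fin d)) ((n₀ : ℝ) + 1) :=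
            ⟨hx, by simp [mem_ball, dist_eq_norm]; linarith⟩
          have : f n₀ x = ENNReal.ofReal (h x) := Set.indicator_of_mem hx' _
          exact this ▸ le_iSup (fun n => f n x) n₀
      · have : ∀ n, f n x = 0 := fun n =>
          Set.indicator_of_notMem (fun hc => hx hc.1) _
        simp [this, Set.indicator_of_notMem hx]
    have hbound : ∀ n, (∫⁻ a, f n a) ≤ ENNReal.ofReal M := by
      intro n
      rw [hf]
      rw [lintegral_indicator (hmeas _)]
      have hpos : (0 : ℝ) < (n : ℝ) + 1 := by positivity
      rw [← ofReal_integral_eq_lintegral_ofReal (hIntBall _ hpos)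
        (Eventually.of_forall h_nonneg)]
      exact ENNReal.ofReal_le_ofReal (hBall_bound _)
    have hkey : ∫⁻ a in Ω, ENNReal.ofReal (h a) ≤ ENNReal.ofReal M := by
      rw [← lintegral_indicator hΩopen.measurableSet]
      calc ∫⁻ a, Ω.indicator (fun x => ENNReal.ofReal (h x)) a
          = ∫⁻ a, ⨆ n, f n a := by
            refine lintegral_congr fun a => (hsup a).symm
        _ = ⨆ n, ∫⁻ a, f n a :=
            lintegral_iSup' hfmeas (Eventually.of_forall hfmono)
        _ ≤ ENNReal.ofReal M := iSup_le hbound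
    exact lt_of_le_of_lt hkey ENNReal.ofReal_lt_top
  -- the total integral
  set T : ℝ := ∫ x in Ω, h x with hT
  have hUnion : (⋃ n : ℕ, Ω ∩ ball (0 : EuclideanSpace ℝ (Fin d)) n) = Ω := by
    rw [← Set.inter_iUnion]
    rw [Set.inter_eq_left]
    intro x _
    obtain ⟨n, hn⟩ := exists_nat_gt ‖x‖
    exact Set.mem_iUnion.2 ⟨n, by simpa [mem_ball, dist_eq_norm] using hn⟩
  have htendsto : Tendsto (fun n : ℕ => ∫ x in Ω ∩ ball 0 n, h x) atTop (nhds T) := by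
    have := tendsto_setIntegral_of_monotone (μ := volume) (f := h)
      (s := fun n : ℕ => Ω ∩ ball (0 : EuclideanSpace ℝ (Fin d)) n) (fun n => hmeas n)
      (fun m n hmn => Set.inter_subset_inter_right Ω
        (ball_subset_ball (by exact_mod_cast hmn)))
      (by rw [hUnion]; exact hIntΩ)
    rwa [hUnion] at this
  -- each ball integral is zero
  have hzero : ∀ R : ℝ, (∫ x in Ω ∩ ball 0 R, h x) = 0 := by
    intro R
    have hnn : 0 ≤ ∫ x in Ω ∩ ball 0 R, h x :=
      setIntegral_nonneg (hmeas R) (fun x _ => h_nonneg x)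
    refine le_antisymm ?_ hnn
    -- the tail bound tends to zero
    have h1 : Tendsto (fun n : ℕ => T - ∫ x in Ω ∩ ball 0 (n : ℝ), h x) atTop (nhds 0) := by
      have := htendsto.const_sub T
      simpa using this
    have h2 : Tendsto (fun n : ℕ => (T - ∫ x in Ω ∩ ball 0 (n : ℝ), h x) ^ δ) atTop
        (nhds 0) := by
      have hc : ContinuousAt (fun t : ℝ => t ^ δ) 0 :=
        Real.continuousAt_rpow_const 0 δ (Or.inr hδ0.le)
      have := hc.tendsto.comp h1
      simpa [Function.comp_def, Real.zero_rpow hδ0.ne'] using this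
    have htail : Tendsto (fun n : ℕ => C * (T - ∫ x in Ω ∩ ball 0 (n : ℝ), h x) ^ δ) atTop
        (nhds 0) := by
      have := h2.const_mul C
      simpa using this
    refine ge_of_tendsto htail ?_
    obtain ⟨N, hN⟩ := exists_nat_gt (max r₀ R)
    filter_upwards [eventually_ge_atTop N] with n hn
    have hnr₀ : r₀ < (n : ℝ) :=
      lt_of_le_of_lt (le_max_left _ _) (lt_of_lt_of_le hN (Nat.cast_le.2 hn))
    have hnR : R ≤ (n : ℝ) :=
      le_trans (le_max_right _ _) (le_trans hN.le (Nat.cast_le.2 hn))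
    have hnpos : (0 : ℝ) < (n : ℝ) := lt_trans hr₀ hnr₀
    -- step 1 : ∫ over B_R ≤ ∫ over B_n
    have s1 : (∫ x in Ω ∩ ball 0 R, h x) ≤ ∫ x in Ω ∩ ball 0 (n : ℝ), h x := by
      refine setIntegral_mono_set (hIntBall _ hnpos)
        (Eventually.of_forall (fun x => h_nonneg x)) ?_
      exact (Set.inter_subset_inter_right Ω (ball_subset_ball hnR)).eventuallyLE
    -- step 2 : the annulus integral is at most the tail
    have hTsplit : (∫ x in Ω ∩ ball 0 (n : ℝ), h x) + (∫ x in Ω \ ball 0 (n : ℝ), h x) = T := by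
      exact integral_inter_add_diff measurableSet_ball hIntΩ
    have s2 : (∫ x in (Ω ∩ ball 0 (2 * (n : ℝ))) \ ball 0 (n : ℝ), h x * φ ((n : ℝ)⁻¹ • x) ^ p)
        ≤ T - ∫ x in Ω ∩ ball 0 (n : ℝ), h x := by
      have a1 : (∫ x in (Ω ∩ ball 0 (2 * (n : ℝ))) \ ball 0 (n : ℝ),
          h x * φ ((n : ℝ)⁻¹ • x) ^ p)
          ≤ ∫ x in (Ω ∩ ball 0 (2 * (n : ℝ))) \ ball 0 (n : ℝ), h x := by
        refine setIntegral_mono_on ((hvint _ hnpos).mono_set Set.diff_subset)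
          (hIntΩ.mono_set (Set.diff_subset.trans Set.inter_subset_left))
          ((hmeas _).diff measurableSet_ball) ?_
        intro x _
        calc h x * φ ((n : ℝ)⁻¹ • x) ^ p ≤ h x * 1 :=
              mul_le_mul_of_nonneg_left (hφp_le_one _ x) (h_nonneg x)
          _ = h x := mul_one _
      have a2 : (∫ x in (Ω ∩ ball 0 (2 * (n : ℝ))) \ ball 0 (n : ℝ), h x)
          ≤ ∫ x in Ω \ ball 0 (n : ℝ), h x := by
        refine setIntegral_mono_set (hIntΩ.mono_set Set.diff_subset)
          (Eventually.of_forall (fun x => h_nonneg x)) ?_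
        exact (Set.diff_subset_diff_left Set.inter_subset_left).eventuallyLE
      linarith
    -- step 3 : assemble
    have hJnn : 0 ≤ ∫ x in (Ω ∩ ball 0 (2 * (n : ℝ))) \ ball 0 (n : ℝ),
        h x * φ ((n : ℝ)⁻¹ • x) ^ p :=
      setIntegral_nonneg ((hmeas _).diff measurableSet_ball) (fun x _ => hhφ_nonneg _ x)
    calc (∫ x in Ω ∩ ball 0 R, h x)
        ≤ ∫ x in Ω ∩ ball 0 (n : ℝ), h x := s1
      _ ≤ ∫ x in Ω ∩ ball 0 (2 * (n : ℝ)), h x * φ ((n : ℝ)⁻¹ • x) ^ p := hI_le _ hnpos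
      _ ≤ C * (∫ x in (Ω ∩ ball 0 (2 * (n : ℝ))) \ ball 0 (n : ℝ),
            h x * φ ((n : ℝ)⁻¹ • x) ^ p) ^ δ := hineq _ hnr₀
      _ ≤ C * (T - ∫ x in Ω ∩ ball 0 (n : ℝ), h x) ^ δ :=
            mul_le_mul_of_nonneg_left (Real.rpow_le_rpow hJnn s2 hδ0.le) hC.le
  -- conclude T = 0
  have hT0 : T = 0 := by
    have : Tendsto (fun n : ℕ => ∫ x in Ω ∩ ball 0 n, h x) atTop (nhds 0) := by
      simp only [hzero]
      exact tendsto_const_nhds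
    exact tendsto_nhds_unique htendsto this
  -- h = 0 a.e. on Ω
  have hae : h =ᵐ[volume.restrict Ω] 0 := by
    rw [← integral_eq_zero_iff_of_nonneg_ae
      (Eventually.of_forall (fun x => h_nonneg x)) hIntΩ]
    exact hT0
  -- h = 0 on Ω
  have hEq : Set.EqOn h 0 Ω :=
    Measure.eqOn_of_ae_eq hae hcont continuousOn_const
      (by rw [hΩopen.interior_eq]; exact subset_closure)
  -- gradient vanishes on Ω
  have hgrad : ∀ x ∈ Ω, gradient v x = 0 := by
    intro x hx
    have := hEq hx
    simp only [hh, Pi.zero_apply] at this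
    have h2 : ‖gradient v x‖ = 0 :=
      (Real.rpow_eq_zero (norm_nonneg _) hp0.ne').1 this
    exact norm_eq_zero.1 h2
  -- fderiv vanishes on Ω
  have hfderiv : ∀ x ∈ Ω, fderiv ℝ v x = 0 := by
    intro x hx
    have := hgrad x hx
    rw [gradient] at this
    have h2 := congrArg (InnerProductSpace.toDual ℝ (EuclideanSpace ℝ (Fin d))) this
    simpa using h2
  -- conclude v is locally constant on Ω, hence constant
  obtain ⟨x₀, hx₀⟩ := hΩconn.nonempty
  refine ⟨v x₀, fun x hx => ?_⟩
  haveI : PreconnectedSpace Ω := Subtype.preconnectedSpace hΩconn.isPreconnected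
  have hlc : IsLocallyConstant (fun y : Ω => v y) := by
    rw [IsLocallyConstant.iff_exists_open]
    rintro ⟨x, hxΩ⟩
    obtain ⟨ε, hε, hball⟩ := Metric.isOpen_iff.1 hΩopen x hxΩ
    refine ⟨((↑) : Ω → EuclideanSpace ℝ (Fin d)) ⁻¹' ball x ε, continuous_subtype_val.isOpen_preimage _ isOpen_ball,
      by simpa using (mem_ball_self hε : x ∈ ball x ε), ?_⟩
    rintro ⟨y, hyΩ⟩ hy
    have hy' : y ∈ ball x ε := hy
    have hdiff : DifferentiableOn ℝ v (ball x ε) :=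
      (hvC1.differentiableOn one_ne_zero).mono hball
    refine (convex_ball x ε).is_const_of_fderivWithin_eq_zero hdiff ?_ hy' (mem_ball_self hε)
    intro z hz
    rw [fderivWithin_of_isOpen isOpen_ball hz]
    exact hfderiv z (hball hz)
  exact hlc.apply_eq_of_preconnectedSpace ⟨x, hx⟩ ⟨x₀, hx₀⟩
end
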